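/- Let (X,d) be a compact metric space and f_n: X → X continuous for each n ≥ 0. If the non-autonomous system x_{n+1} = f_n(x_n) has an uncountable distributionally δ'-scrambled set in some increasing sequence P ⊂ ℕ (for some δ' > 0), then it has an uncountable Li–Yorke δ-scrambled set with δ = δ'/2; in particular, distributional δ'-chaos in a sequence implies Li–Yorke δ-chaos. -/
import Mathlib


open Filter Metric Set
open scoped Classical

/-- Trajectory of the non-autonomous system: `orb f n = f_{n-1} ∘ ⋯ ∘ f_0`, `orb f 0 = id`. -/
def orb {X : Type*} (f : ℕ → X → X) : ℕ → X → X
  | 0 => id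
  | n + 1 => fun x => f n (orb f n x)

/-- Cesàro average of the indicator of `dist (f_0^{p i} x) (f_0^{p i} y) < ε` over `i < n`. -/
noncomputable def distAvg {X : Type*} [MetricSpace X] (f : ℕ → X → X) (p : ℕ → ℕ)
    (x y : X) (ε : ℝ) (n : ℕ) : ℝ :=
  (∑ i ∈ Finset.range n, if dist (orb f (p i) x) (orb f (p i) y) < ε then (1 : ℝ) else 0) / n

lemma distAvg_nonneg {X : Type*} [MetricSpace X] (f : ℕ → X → X) (p : ℕ → ℕ)
    (x y : X) (ε : ℝ) (n : ℕ) : 0 ≤ distAvg f p x y ε n := by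
  apply div_nonneg _ (Nat.cast_nonneg n)
  apply Finset.sum_nonneg
  intro i _
  split <;> norm_num

lemma distAvg_le_one {X : Type*} [MetricSpace X] (f : ℕ → X → X) (p : ℕ → ℕ)
    (x y : X) (ε : ℝ) (n : ℕ) : distAvg f p x y ε n ≤ 1 := by
  rcases Nat.eq_zero_or_pos n with h | h
  · simp [distAvg, h]
  · rw [distAvg, div_le_one (by exact_mod_cast h)]
    calc (∑ i ∈ Finset.range n, if dist (orb f (p i) x) (orb f (p i) y) < ε then (1 : ℝ) else 0)
        ≤ ∑ i ∈ Finset.range n, (1 : ℝ) := by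
          apply Finset.sum_le_sum; intro i _; split <;> norm_num
      _ = n := by simp

theorem stmt6 {X : Type*} [MetricSpace X] [CompactSpace X]
    (f : ℕ → X → X) (hf : ∀ n, Continuous (f n)) (p : ℕ → ℕ) (hp : StrictMono p)
    (δ' : ℝ) (hδ' : 0 < δ') (D : Set X) (hD : ¬ D.Countable)
    (hscr : ∀ x ∈ D, ∀ y ∈ D, x ≠ y →
      (∀ ε > 0, limsup (distAvg f p x y ε) atTop = 1) ∧
      liminf (distAvg f p x y δ') atTop = 0) :
    ∃ S : Set X, ¬ S.Countable ∧ ∀ x ∈ S, ∀ y ∈ S, x ≠ y →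
      liminf (fun n => dist (orb f n x) (orb f n y)) atTop = 0 ∧
      δ' / 2 < limsup (fun n => dist (orb f n x) (orb f n y)) atTop := by
  refine ⟨D, hD, ?_⟩
  intro x hx y hy hxy
  obtain ⟨h1, h2⟩ := hscr x hx y hy hxy
  set u : ℕ → ℝ := fun n => dist (orb f n x) (orb f n y) with hu
  obtain ⟨C, hC⟩ : ∃ C : ℝ, ∀ n, u n ≤ C := by
    refine ⟨Metric.diam (Set.univ : Set X), fun n => ?_⟩
    exact Metric.dist_le_diam_of_mem isCompact_univ.isBounded (mem_univ _) (mem_univ _)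
  have hub : IsBoundedUnder (· ≤ ·) atTop u := isBoundedUnder_of ⟨C, hC⟩
  have hlb : IsBoundedUnder (· ≥ ·) atTop u := isBoundedUnder_of ⟨0, fun n => dist_nonneg⟩
  have hAvgCobdd_le : ∀ ε : ℝ, IsCoboundedUnder (· ≤ ·) atTop (distAvg f p x y ε) :=
    fun ε => IsBoundedUnder.isCoboundedUnder_le
      (isBoundedUnder_of ⟨0, fun n => distAvg_nonneg f p x y ε n⟩)
  have hAvgCobdd_ge : ∀ ε : ℝ, IsCoboundedUnder (· ≥ ·) atTop (distAvg f p x y ε) :=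
    fun ε => IsBoundedUnder.isCoboundedUnder_ge
      (isBoundedUnder_of ⟨1, fun n => distAvg_le_one f p x y ε n⟩)
  -- Claim A : for every ε > 0, frequently u (p i) < ε
  have hA : ∀ ε : ℝ, 0 < ε → ∃ᶠ i in atTop, u (p i) < ε := by
    intro ε hε
    by_contra h
    rw [not_frequently] at h
    simp only [not_lt] at h
    obtain ⟨N, hN⟩ := eventually_atTop.mp h
    have hev : ∀ᶠ n in atTop, distAvg f p x y ε n ≤ (1:ℝ)/2 := by
      filter_upwards [eventually_ge_atTop (2*N + 1)] with n hn
      have hnpos : (0:ℝ) < n := by exact_mod_cast (by omega : 0 < n)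
      have hsum : (∑ i ∈ Finset.range n, if dist (orb f (p i) x) (orb f (p i) y) < ε
          then (1 : ℝ) else 0) ≤ N := by
        calc (∑ i ∈ Finset.range n, if dist (orb f (p i) x) (orb f (p i) y) < ε
              then (1 : ℝ) else 0)
            ≤ ∑ i ∈ Finset.range n, if i < N then (1:ℝ) else 0 := by
              apply Finset.sum_le_sum
              intro i _
              by_cases hi : i < N
              · simp [hi]; split <;> norm_num
              · push_neg at hi
                have h1' : ε ≤ u (p i) := hN i hi
                have h2' : ¬ dist (orb f (p i) x) (orb f (p i) y) < ε := not_lt.mpr h1'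
                simp [h2', Nat.not_lt.mpr hi]
          _ = ∑ i ∈ Finset.range N, (if i < N then (1:ℝ) else 0) := by
              refine (Finset.sum_subset (Finset.range_subset_range.mpr (by omega)) ?_).symm
              intro i _ hni
              simp only [Finset.mem_range] at hni
              simp [hni]
          _ = ∑ i ∈ Finset.range N, (1:ℝ) := by
              refine Finset.sum_congr rfl fun i hi => if_pos (Finset.mem_range.mp hi)
          _ = N := by simp
      rw [distAvg, div_le_iff₀ hnpos]
      calc (∑ i ∈ Finset.range n, if dist (orb f (p i) x) (orb f (p i) y) < ε
            then (1 : ℝ) else 0) ≤ N := hsum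
        _ ≤ 1/2 * n := by
            have : (2*N + 1 : ℝ) ≤ n := by exact_mod_cast hn
            linarith
    have hle : limsup (distAvg f p x y ε) atTop ≤ 1/2 :=
      limsup_le_of_le (hAvgCobdd_le ε) hev
    rw [h1 ε hε] at hle
    norm_num at hle
  -- Claim B : frequently δ' ≤ u (p i)
  have hB : ∃ᶠ i in atTop, δ' ≤ u (p i) := by
    by_contra h
    rw [not_frequently] at h
    simp only [not_le] at h
    obtain ⟨N, hN⟩ := eventually_atTop.mp h
    have hev : ∀ᶠ n in atTop, (1:ℝ)/2 ≤ distAvg f p x y δ' n := by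
      filter_upwards [eventually_ge_atTop (2*N + 1)] with n hn
      have hNn : N ≤ n := by omega
      have hnpos : (0:ℝ) < n := by exact_mod_cast (by omega : 0 < n)
      have hsum : ((n : ℝ) - N) ≤ (∑ i ∈ Finset.range n,
          if dist (orb f (p i) x) (orb f (p i) y) < δ' then (1 : ℝ) else 0) := by
        calc ((n:ℝ) - N) = ((n - N : ℕ) : ℝ) := by rw [Nat.cast_sub hNn]
          _ = ∑ i ∈ Finset.Ico N n, (1:ℝ) := by
              rw [Finset.sum_const, Nat.card_Ico]; simp
          _ = ∑ i ∈ Finset.Ico N n,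
                (if dist (orb f (p i) x) (orb f (p i) y) < δ' then (1 : ℝ) else 0) := by
              apply Finset.sum_congr rfl
              intro i hi
              rw [Finset.mem_Ico] at hi
              have : dist (orb f (p i) x) (orb f (p i) y) < δ' := hN i hi.1
              simp [this]
          _ ≤ ∑ i ∈ Finset.range n,
                (if dist (orb f (p i) x) (orb f (p i) y) < δ' then (1 : ℝ) else 0) := by
              apply Finset.sum_le_sum_of_subset_of_nonneg
              · intro i hi
                rw [Finset.mem_Ico] at hi
                exact Finset.mem_range.mpr hi.2
              · intros; split <;> norm_num
      rw [distAvg, le_div_iff₀ hnpos]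
      have : (2*N + 1 : ℝ) ≤ n := by exact_mod_cast hn
      calc (1:ℝ)/2 * n ≤ (n:ℝ) - N := by linarith
        _ ≤ _ := hsum
    have hge : (1:ℝ)/2 ≤ liminf (distAvg f p x y δ') atTop :=
      le_liminf_of_le (hAvgCobdd_ge δ') hev
    rw [h2] at hge
    norm_num at hge
  constructor
  · -- liminf u = 0
    have hfreq : ∀ ε : ℝ, 0 < ε → ∃ᶠ n in atTop, u n ≤ ε := by
      intro ε hε
      rw [frequently_atTop]
      intro N
      obtain ⟨i, hi, hui⟩ := (frequently_atTop.mp (hA ε hε)) N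
      exact ⟨p i, le_trans hi (hp.le_apply), le_of_lt hui⟩
    have h0le : (0:ℝ) ≤ liminf u atTop :=
      le_liminf_of_le (hub.isCoboundedUnder_ge) (Eventually.of_forall fun n => dist_nonneg)
    have hle0 : liminf u atTop ≤ 0 := by
      apply le_of_forall_pos_le_add
      intro ε hε
      have := liminf_le_of_frequently_le (hfreq ε hε) hlb
      linarith
    linarith
  · -- δ'/2 < limsup u
    have hfreq : ∃ᶠ n in atTop, δ' ≤ u n := by
      rw [frequently_atTop]
      intro N
      obtain ⟨i, hi, hui⟩ := (frequently_atTop.mp hB) N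
      exact ⟨p i, le_trans hi (hp.le_apply), hui⟩
    have := le_limsup_of_frequently_le hfreq hub
    linarith
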